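/- arXiv:1603.02221 — 2 statements merged into one kernel-verified Lean document; each statement's English description precedes it below -/
import Mathlib

section
/- The set of completely monotone generators G_{c.mon} is contained in the set of monotone generators G_{mon}: if L ∈ (R⁺)^{S₂} can be written as a nonnegative linear combination L = Σ_{f ∈ M} Λ_f I_f over increasing functions f : S → S with Λ_f ≥ 0, then ⟨L, W^{Γ,x,y}⟩ ≥ 0 for every up-set Γ and all x, y ∈ S. -/
open Finset
open scoped Classical

/-- The vector `W^{Γ,x,y}` from the paper, as a function of coordinates `(v,z)`. -/
noncomputable def Wvec {S : Type*} [PartialOrder S] (Γ : Finset S) (x y v z : S) : ℝ :=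
  if (x ≤ y ∧ y ∉ Γ ∧ v = y ∧ z ∈ Γ) ∨ (y ≤ x ∧ y ∈ Γ ∧ v = y ∧ z ∉ Γ) then 1
  else if (x ≤ y ∧ y ∉ Γ ∧ v = x ∧ z ∈ Γ) ∨ (y ≤ x ∧ y ∈ Γ ∧ v = x ∧ z ∉ Γ) then -1
  else 0

/-- The vector `I_f` from the paper: `(I_f)_{x,y} = 1` iff `f x = y`. -/
noncomputable def Ivec {S : Type*} (f : S → S) (x y : S) : ℝ := if f x = y then 1 else 0

/-- `Γ` is an up-set: upward closed. -/
def IsUpSet {S : Type*} [Preorder S] (Γ : Finset S) : Prop :=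
  ∀ a b : S, a ∈ Γ → a ≤ b → b ∈ Γ

/-- Euclidean inner product `⟨L, W^{Γ,x,y}⟩` over the off-diagonal coordinates `S₂`. -/
noncomputable def dotW {S : Type*} [Fintype S] [PartialOrder S]
    (L : S → S → ℝ) (Γ : Finset S) (x y : S) : ℝ :=
  ∑ p ∈ Finset.univ.filter (fun p : S × S => p.1 ≠ p.2), L p.1 p.2 * Wvec Γ x y p.1 p.2

/-- `L` is (the off-diagonal part of) a monotone generator. -/
def IsMonGen {S : Type*} [Fintype S] [PartialOrder S] (L : S → S → ℝ) : Prop :=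
  (∀ x y : S, x ≠ y → 0 ≤ L x y) ∧
    ∀ Γ : Finset S, IsUpSet Γ → ∀ x y : S, 0 ≤ dotW L Γ x y

/-- `L` is a completely monotone generator: a nonnegative combination of the `I_f`
over increasing maps `f`. -/
def IsCMonGen {S : Type*} [Fintype S] [PartialOrder S] (L : S → S → ℝ) : Prop :=
  ∃ Λ : (S → S) → ℝ, (∀ f, 0 ≤ Λ f) ∧ (∀ f, ¬ Monotone f → Λ f = 0) ∧
    ∀ x y : S, x ≠ y → L x y = ∑ f : S → S, Λ f * Ivec f x y

/-! By linearity and `Λ ≥ 0` it suffices to treat a single `I_f` with `f` increasing. Since `Γ`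
is an up-set, `W^{Γ,x,y}` vanishes on the diagonal, so `⟨I_f, W^{Γ,x,y}⟩ = ∑_v W(v, f v)`, and
only `v = x` and `v = y` contribute. For `x < y`, `y ∉ Γ` this is `[f y ∈ Γ] - [f x ∈ Γ] ≥ 0`
because `f x ≤ f y` and `Γ` is an up-set; the case `y < x`, `y ∈ Γ` is dual, and otherwise no
term is negative. -/

section

variable {S : Type*} [PartialOrder S] {Γ : Finset S} {x y v z a b : S}

lemma Wvec_diag_eq_zero (hΓ : IsUpSet Γ) : Wvec Γ x y v v = 0 := by
  have hΓx : x ∈ Γ → x ≤ y → y ∈ Γ := hΓ x y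
  have hΓy : y ∈ Γ → y ≤ x → x ∈ Γ := hΓ y x
  unfold Wvec
  split_ifs <;> grind

lemma Wvec_eq_zero_of_ne (hx : v ≠ x) (hy : v ≠ y) : Wvec Γ x y v z = 0 := by
  unfold Wvec
  split_ifs <;> grind

lemma Wvec_same_nonneg : 0 ≤ Wvec Γ x x v z := by
  unfold Wvec
  split_ifs <;> grind

lemma Wvec_add_nonneg (hxy : x ≠ y) (hle : x ≤ y → a ∈ Γ → b ∈ Γ)
    (hge : y ≤ x → b ∈ Γ → a ∈ Γ) : 0 ≤ Wvec Γ x y x a + Wvec Γ x y y b := by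
  unfold Wvec
  split_ifs <;> grind

variable [Fintype S]

lemma dotW_eq_sum (hΓ : IsUpSet Γ) (L : S → S → ℝ) :
    dotW L Γ x y = ∑ p : S × S, L p.1 p.2 * Wvec Γ x y p.1 p.2 := by
  rw [dotW, Finset.sum_filter]
  refine Finset.sum_congr rfl fun p _ => ?_
  rw [ite_eq_left_iff, not_not]
  intro h
  rw [h, Wvec_diag_eq_zero hΓ, mul_zero]

lemma dotW_Ivec (hΓ : IsUpSet Γ) (f : S → S) :
    dotW (Ivec f) Γ x y = ∑ v, Wvec Γ x y v (f v) := by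
  simp [dotW_eq_sum hΓ, Fintype.sum_prod_type, Ivec]

lemma dotW_Ivec_nonneg {f : S → S} (hf : Monotone f) (hΓ : IsUpSet Γ) :
    0 ≤ dotW (Ivec f) Γ x y := by
  rw [dotW_Ivec hΓ]
  obtain rfl | hxy := eq_or_ne x y
  · exact Finset.sum_nonneg fun v _ => Wvec_same_nonneg
  rw [Fintype.sum_eq_add x y hxy fun v hv => Wvec_eq_zero_of_ne hv.1 hv.2]
  exact Wvec_add_nonneg hxy (fun h hx => hΓ _ _ hx (hf h)) fun h hy => hΓ _ _ hy (hf h)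

lemma dotW_eq_sum_of_offDiag_eq {ι : Type*} [Fintype ι] {L : S → S → ℝ} (c : ι → ℝ)
    (M : ι → S → S → ℝ) (hL : ∀ x y, x ≠ y → L x y = ∑ i, c i * M i x y) :
    dotW L Γ x y = ∑ i, c i * dotW (M i) Γ x y := by
  simp only [dotW, Finset.mul_sum]
  rw [Finset.sum_comm]
  refine Finset.sum_congr rfl fun p hp => ?_
  rw [hL _ _ (Finset.mem_filter.mp hp).2, Finset.sum_mul]
  simp only [mul_assoc]

end

/-- completely monotone generators are monotone. -/
theorem cmon_subset_mon {S : Type*} [Fintype S] [PartialOrder S]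
    (L : S → S → ℝ) (Λ : (S → S) → ℝ) (hΛ : ∀ f, 0 ≤ Λ f)
    (hΛmon : ∀ f, ¬ Monotone f → Λ f = 0)
    (hL : ∀ x y : S, x ≠ y → L x y = ∑ f : S → S, Λ f * Ivec f x y) :
    ∀ Γ : Finset S, IsUpSet Γ → ∀ x y : S, 0 ≤ dotW L Γ x y := by
  intro Γ hΓ x y
  rw [dotW_eq_sum_of_offDiag_eq Λ Ivec hL]
  refine Finset.sum_nonneg fun f _ => ?_
  by_cases hf : Monotone f
  · exact mul_nonneg (hΛ f) (dotW_Ivec_nonneg hf hΓ)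
  · simp [hΛmon f hf]
end

section
/- On a finite linearly ordered set S, every generator L ∈ (R⁺)^{S₂} satisfying the monotonicity inequalities ⟨L, W^{Γ,x,y}⟩ ≥ 0 for all up-sets Γ and all x, y ∈ S can be written as a nonnegative linear combination of the vectors I_f over increasing functions f : S → S (i.e., monotonicity implies complete monotonicity on chains). -/
open Finset
open scoped Classical

/-!
Put mass `totalOutRate L - outRate L x` on the diagonal of row `x` of `L`: all rows of the
resulting kernel `μ` then have the same mass `M`. Testing the monotonicity inequalities on the
up-sets `{z | s < z}` shows that the cumulative row sums `rowCdf` decrease from row to row, i.e.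
the rows are stochastically ordered; for two rows on opposite sides of the cut this holds because
`M` exceeds the sum of any two off-diagonal row sums. The quantile coupling then finishes the
proof: for `t ∈ [0, M)` the map `x ↦ quantile x t` is increasing, the `t` at which
`quantile x t = y` form an interval of length `μ x y`, and `Λ f` is the Lebesgue measure of the
set of `t` at which the map is `f`.
-/

open MeasureTheory

section Wvec

variable {S : Type*} [PartialOrder S] {Γ : Finset S} {x y v z : S}

lemma Wvec_of_le_of_notMem (hxy : x ≤ y) (hy : y ∉ Γ) (hne : x ≠ y) :
    Wvec Γ x y v z = (if v = y ∧ z ∈ Γ then 1 else 0) - (if v = x ∧ z ∈ Γ then 1 else 0) := by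
  unfold Wvec; split_ifs <;> grind

lemma Wvec_of_ge_of_mem [Fintype S] (hyx : y ≤ x) (hy : y ∈ Γ) (hne : x ≠ y) :
    Wvec Γ x y v z = (if v = y ∧ z ∈ Γᶜ then 1 else 0) - (if v = x ∧ z ∈ Γᶜ then 1 else 0) := by
  unfold Wvec; split_ifs <;> grind [Finset.mem_compl]

end Wvec

section dotW

variable {S : Type*} [Fintype S] [PartialOrder S] {Γ A : Finset S} {x y : S}

lemma dotW_eq_of_Wvec_eq (L : S → S → ℝ) (hx : x ∉ A) (hy : y ∉ A)
    (hW : ∀ v z, Wvec Γ x y v z =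
      (if v = y ∧ z ∈ A then 1 else 0) - (if v = x ∧ z ∈ A then 1 else 0)) :
    dotW L Γ x y = ∑ z ∈ A, L y z - ∑ z ∈ A, L x z := by
  have hdiag : ∀ p ∈ (Finset.univ : Finset (S × S)), L p.1 p.2 * Wvec Γ x y p.1 p.2 ≠ 0 →
      p.1 ≠ p.2 := by
    rintro ⟨v, z⟩ - h (rfl : v = z)
    rw [hW] at h
    grind
  rw [dotW, Finset.sum_filter_of_ne hdiag]
  simp [Fintype.sum_prod_type, hW, mul_sub, ite_and, Finset.sum_ite_mem]

lemma IsUpSet.dotW_of_le_of_notMem (L : S → S → ℝ) (hΓ : IsUpSet Γ) (hxy : x ≤ y) (hne : x ≠ y)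
    (hy : y ∉ Γ) : dotW L Γ x y = ∑ z ∈ Γ, L y z - ∑ z ∈ Γ, L x z :=
  dotW_eq_of_Wvec_eq L (fun hx => hy (hΓ x y hx hxy)) hy fun _ _ => Wvec_of_le_of_notMem hxy hy hne

lemma IsUpSet.dotW_of_ge_of_mem (L : S → S → ℝ) (hΓ : IsUpSet Γ) (hyx : y ≤ x) (hne : x ≠ y)
    (hy : y ∈ Γ) : dotW L Γ x y = ∑ z ∈ Γᶜ, L y z - ∑ z ∈ Γᶜ, L x z :=
  dotW_eq_of_Wvec_eq L (by simpa using hΓ y x hy hyx) (by simpa using hy)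
    fun _ _ => Wvec_of_ge_of_mem hyx hy hne

end dotW

section Uniformization

variable {S : Type*} [Fintype S] {L : S → S → ℝ} {A : Finset S} {x x' : S}

noncomputable def outRate (L : S → S → ℝ) (x : S) : ℝ := ∑ z ∈ univ.erase x, L x z

noncomputable def totalOutRate (L : S → S → ℝ) : ℝ := ∑ x, outRate L x

noncomputable def uniformized (L : S → S → ℝ) (x y : S) : ℝ :=
  if y = x then totalOutRate L - outRate L x else L x y

lemma outRate_nonneg (hL : ∀ x y, x ≠ y → 0 ≤ L x y) (x : S) : 0 ≤ outRate L x :=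
  sum_nonneg fun z hz => hL x z (ne_of_mem_erase hz).symm

lemma outRate_le_totalOutRate (hL : ∀ x y, x ≠ y → 0 ≤ L x y) (x : S) :
    outRate L x ≤ totalOutRate L :=
  single_le_sum (fun z _ => outRate_nonneg hL z) (mem_univ x)

lemma outRate_add_outRate_le (hL : ∀ x y, x ≠ y → 0 ≤ L x y) (h : x ≠ x') :
    outRate L x + outRate L x' ≤ totalOutRate L := by
  rw [← sum_pair h]
  exact sum_le_sum_of_subset_of_nonneg (subset_univ _) fun z _ _ => outRate_nonneg hL z

lemma sum_le_outRate (hL : ∀ x y, x ≠ y → 0 ≤ L x y) (hx : x ∉ A) :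
    ∑ z ∈ A, L x z ≤ outRate L x :=
  sum_le_sum_of_subset_of_nonneg (fun z hz => mem_erase.2 ⟨fun h => hx (h ▸ hz), mem_univ z⟩)
    fun z hz _ => hL x z (ne_of_mem_erase hz).symm

lemma uniformized_of_ne (h : x ≠ x') : uniformized L x x' = L x x' :=
  if_neg h.symm

lemma uniformized_nonneg (hL : ∀ x y, x ≠ y → 0 ≤ L x y) (x y : S) : 0 ≤ uniformized L x y := by
  by_cases h : y = x
  · simpa [uniformized, h] using outRate_le_totalOutRate hL x
  · exact (uniformized_of_ne (Ne.symm h)).symm ▸ hL x y (Ne.symm h)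

lemma sum_uniformized_of_notMem (hx : x ∉ A) : ∑ z ∈ A, uniformized L x z = ∑ z ∈ A, L x z :=
  sum_congr rfl fun _ hz => uniformized_of_ne fun h => hx (h ▸ hz)

lemma sum_uniformized (L : S → S → ℝ) (x : S) : ∑ y, uniformized L x y = totalOutRate L := by
  rw [← add_sum_erase _ _ (mem_univ x), sum_uniformized_of_notMem (notMem_erase x _),
    uniformized, if_pos rfl, outRate, sub_add_cancel]

end Uniformization

section RowCdf

variable {S : Type*} [Fintype S] [LinearOrder S]

noncomputable def rowCdf (μ : S → S → ℝ) (x s : S) : ℝ := ∑ z ∈ {z | z ≤ s}, μ x z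

variable {L : S → S → ℝ} {x x' s : S}

lemma rowCdf_add_sum_Ioi (μ : S → S → ℝ) (x s : S) :
    rowCdf μ x s + ∑ z ∈ {z | s < z}, μ x z = ∑ z, μ x z := by
  simpa only [rowCdf, not_le] using sum_filter_add_sum_filter_not univ (· ≤ s) (μ x)

lemma rowCdf_uniformized_of_le (h : x ≤ s) :
    rowCdf (uniformized L) x s = totalOutRate L - ∑ z ∈ {z | s < z}, L x z := by
  rw [← sum_uniformized L x, ← rowCdf_add_sum_Ioi,
    sum_uniformized_of_notMem (by simpa using h)]
  ring

lemma rowCdf_uniformized_of_lt (h : s < x) :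
    rowCdf (uniformized L) x s = ∑ z ∈ {z | z ≤ s}, L x z :=
  sum_uniformized_of_notMem (by simpa using h)

lemma isUpSet_Ioi (s : S) : IsUpSet ({z | s < z} : Finset S) := by
  intro a b ha hab
  simp only [mem_filter, mem_univ, true_and] at ha ⊢
  exact ha.trans_le hab

namespace IsMonGen

lemma sum_Ioi_le_sum_Ioi (hL : IsMonGen L) (hxx' : x ≤ x') (hs : x' ≤ s) :
    ∑ z ∈ {z | s < z}, L x z ≤ ∑ z ∈ {z | s < z}, L x' z := by
  rcases hxx'.eq_or_lt with rfl | hlt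
  · rfl
  have h := hL.2 _ (isUpSet_Ioi s) x x'
  rw [(isUpSet_Ioi s).dotW_of_le_of_notMem L hxx' hlt.ne (by simpa using hs)] at h
  linarith

lemma sum_Iic_le_sum_Iic (hL : IsMonGen L) (hxx' : x ≤ x') (hs : s < x) :
    ∑ z ∈ {z | z ≤ s}, L x' z ≤ ∑ z ∈ {z | z ≤ s}, L x z := by
  rcases hxx'.eq_or_lt with rfl | hlt
  · rfl
  have h := hL.2 _ (isUpSet_Ioi s) x' x
  rw [(isUpSet_Ioi s).dotW_of_ge_of_mem L hxx' hlt.ne' (by simpa using hs)] at h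
  simp only [compl_filter, not_lt] at h
  linarith

lemma rowCdf_uniformized_antitone (hL : IsMonGen L) (hxx' : x ≤ x') (s : S) :
    rowCdf (uniformized L) x' s ≤ rowCdf (uniformized L) x s := by
  rcases le_or_gt x' s with hs | hs
  · rw [rowCdf_uniformized_of_le hs, rowCdf_uniformized_of_le (hxx'.trans hs)]
    linarith [hL.sum_Ioi_le_sum_Ioi hxx' hs]
  rw [rowCdf_uniformized_of_lt hs]
  rcases le_or_gt x s with hxs | hxs
  · rw [rowCdf_uniformized_of_le hxs]
    have h₁ := sum_le_outRate hL.1 (A := {z | z ≤ s}) (x := x') (by simpa using hs)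
    have h₂ := sum_le_outRate hL.1 (A := {z | s < z}) (x := x) (by simpa using hxs)
    have h₃ := outRate_add_outRate_le hL.1 (hxs.trans_lt hs).ne
    linarith
  · rw [rowCdf_uniformized_of_lt hxs]
    exact hL.sum_Iic_le_sum_Iic hxx' hxs

end IsMonGen

end RowCdf

section QuantileCoupling

variable {S : Type*} [Fintype S] [LinearOrder S] {μ : S → S → ℝ} {M t : ℝ} {x y s : S}

lemma rowCdf_sub_self (μ : S → S → ℝ) (x y : S) :
    rowCdf μ x y - μ x y = ∑ z ∈ {z | z < y}, μ x z := by
  have h : ({z | z ≤ y} : Finset S) = insert y ({z | z < y} : Finset S) := by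
    ext z; simp [le_iff_lt_or_eq, or_comm]
  rw [rowCdf, h, sum_insert (by simp), add_sub_cancel_left]

lemma rowCdf_sub_self_nonneg (hμ : ∀ x y, 0 ≤ μ x y) (x y : S) : 0 ≤ rowCdf μ x y - μ x y :=
  rowCdf_sub_self μ x y ▸ sum_nonneg fun z _ => hμ x z

lemma rowCdf_le_rowCdf_sub_self (hμ : ∀ x y, 0 ≤ μ x y) (h : s < y) :
    rowCdf μ x s ≤ rowCdf μ x y - μ x y := by
  rw [rowCdf_sub_self]
  refine sum_le_sum_of_subset_of_nonneg (fun z hz => ?_) fun z _ _ => hμ x z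
  simp only [mem_filter, mem_univ, true_and] at hz ⊢
  exact hz.trans_lt h

lemma rowCdf_le (hμ : ∀ x y, 0 ≤ μ x y) (hM : ∀ x, ∑ y, μ x y = M) (x s : S) :
    rowCdf μ x s ≤ M := by
  rw [← hM x, ← rowCdf_add_sum_Ioi μ x s]
  exact le_add_of_nonneg_right (sum_nonneg fun z _ => hμ x z)

/-- The generalized inverse of `rowCdf μ x`. The fallback `x` is a junk value, taken only when `t`
is at least the mass of row `x`. -/
noncomputable def quantile (μ : S → S → ℝ) (x : S) (t : ℝ) : S :=
  if h : ({s | t < rowCdf μ x s} : Finset S).Nonempty then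
    ({s | t < rowCdf μ x s} : Finset S).min' h
  else x

lemma nonempty_lt_rowCdf (hM : ∀ x, ∑ y, μ x y = M) (ht : t < M) (x : S) :
    ({s | t < rowCdf μ x s} : Finset S).Nonempty := by
  refine ⟨univ.max' ⟨x, mem_univ x⟩, ?_⟩
  have h : ({z | z ≤ univ.max' ⟨x, mem_univ x⟩} : Finset S) = univ :=
    filter_true_of_mem fun z hz => le_max' _ z hz
  rw [mem_filter, rowCdf, h, hM x]
  exact ⟨mem_univ _, ht⟩

lemma lt_rowCdf_quantile (hM : ∀ x, ∑ y, μ x y = M) (ht : t < M) (x : S) :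
    t < rowCdf μ x (quantile μ x t) := by
  have hne := nonempty_lt_rowCdf hM ht x
  rw [quantile, dif_pos hne]
  exact (mem_filter.1 (min'_mem _ hne)).2

lemma quantile_le (h : t < rowCdf μ x s) : quantile μ x t ≤ s := by
  have hs : s ∈ ({s | t < rowCdf μ x s} : Finset S) := by simpa using h
  rw [quantile, dif_pos ⟨s, hs⟩]
  exact min'_le _ s hs

lemma quantile_mem_Ico (hM : ∀ x, ∑ y, μ x y = M) (ht₀ : 0 ≤ t) (ht : t < M) (x : S) :
    t ∈ Set.Ico (rowCdf μ x (quantile μ x t) - μ x (quantile μ x t))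
      (rowCdf μ x (quantile μ x t)) := by
  set q := quantile μ x t
  refine ⟨?_, lt_rowCdf_quantile hM ht x⟩
  by_contra! hlt
  rw [rowCdf_sub_self] at hlt
  have hne : ({z | z < q} : Finset S).Nonempty := by
    by_contra h
    simp only [not_nonempty_iff_eq_empty.1 h, sum_empty] at hlt
    linarith
  -- the largest point below `q` already has `rowCdf` above `t`, contradicting minimality of `q`
  set s := ({z | z < q} : Finset S).max' hne
  have hsq : s < q := (mem_filter.1 (max'_mem _ hne)).2
  have hs : ({z | z ≤ s} : Finset S) = ({z | z < q} : Finset S) := by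
    ext z
    simp only [mem_filter, mem_univ, true_and]
    exact ⟨fun hz => hz.trans_lt hsq, fun hz => le_max' _ z (by simpa using hz)⟩
  exact (quantile_le (by rwa [rowCdf, hs])).not_gt hsq

lemma quantile_eq_iff (hμ : ∀ x y, 0 ≤ μ x y) (hM : ∀ x, ∑ y, μ x y = M) (ht₀ : 0 ≤ t)
    (ht : t < M) : quantile μ x t = y ↔ t ∈ Set.Ico (rowCdf μ x y - μ x y) (rowCdf μ x y) := by
  refine ⟨fun h => h ▸ quantile_mem_Ico hM ht₀ ht x, fun hy => ?_⟩
  have hq := quantile_mem_Ico hM ht₀ ht x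
  rcases lt_trichotomy (quantile μ x t) y with h | h | h
  · linarith [hq.2, hy.1, rowCdf_le_rowCdf_sub_self hμ (x := x) h]
  · exact h
  · linarith [hq.1, hy.2, rowCdf_le_rowCdf_sub_self hμ (x := x) h]

lemma quantile_fiber (hμ : ∀ x y, 0 ≤ μ x y) (hM : ∀ x, ∑ y, μ x y = M) (x y : S) :
    {t | t ∈ Set.Ico 0 M ∧ quantile μ x t = y} =
      Set.Ico (rowCdf μ x y - μ x y) (rowCdf μ x y) := by
  ext t
  refine ⟨fun ⟨ht, h⟩ => (quantile_eq_iff hμ hM ht.1 ht.2).1 h, fun h => ?_⟩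
  have ht : t ∈ Set.Ico 0 M :=
    ⟨(rowCdf_sub_self_nonneg hμ x y).trans h.1, h.2.trans_le (rowCdf_le hμ hM x y)⟩
  exact ⟨ht, (quantile_eq_iff hμ hM ht.1 ht.2).2 h⟩

lemma monotone_quantile (hM : ∀ x, ∑ y, μ x y = M)
    (hanti : ∀ x x', x ≤ x' → ∀ s, rowCdf μ x' s ≤ rowCdf μ x s) (ht : t < M) :
    Monotone (quantile μ · t) :=
  fun _ _ h => quantile_le ((lt_rowCdf_quantile hM ht _).trans_le (hanti _ _ h _))

def quantileFiber (μ : S → S → ℝ) (M : ℝ) (f : S → S) : Set ℝ :=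
  {t | t ∈ Set.Ico 0 M ∧ (quantile μ · t) = f}

lemma measurableSet_quantileFiber (hμ : ∀ x y, 0 ≤ μ x y) (hM : ∀ x, ∑ y, μ x y = M)
    (f : S → S) : MeasurableSet (quantileFiber μ M f) := by
  have h : quantileFiber μ M f =
      Set.Ico 0 M ∩ ⋂ x, {t | t ∈ Set.Ico 0 M ∧ quantile μ x t = f x} := by
    ext t
    simp only [quantileFiber, Set.mem_ofPred_eq, Set.mem_inter_iff, Set.mem_iInter, funext_iff]
    grind
  rw [h]
  simp_rw [quantile_fiber hμ hM]
  exact measurableSet_Ico.inter (MeasurableSet.iInter fun _ => measurableSet_Ico)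

lemma biUnion_quantileFiber (μ : S → S → ℝ) (M : ℝ) (x y : S) :
    ⋃ f ∈ ({f | f x = y} : Finset (S → S)), quantileFiber μ M f =
      {t | t ∈ Set.Ico 0 M ∧ quantile μ x t = y} := by
  ext t
  simp only [quantileFiber, Set.mem_iUnion, Set.mem_ofPred_eq, mem_filter, mem_univ, true_and]
  exact ⟨fun ⟨f, hfx, ht, hf⟩ => ⟨ht, (congrFun hf x).trans hfx⟩, fun ⟨ht, hq⟩ => ⟨_, hq, ht, rfl⟩⟩

theorem exists_monotone_decomposition (hμ : ∀ x y, 0 ≤ μ x y) (hM : ∀ x, ∑ y, μ x y = M)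
    (hanti : ∀ x x', x ≤ x' → ∀ s, rowCdf μ x' s ≤ rowCdf μ x s) :
    ∃ Λ : (S → S) → ℝ, (∀ f, 0 ≤ Λ f) ∧ (∀ f, ¬ Monotone f → Λ f = 0) ∧
      ∀ x y, μ x y = ∑ f : S → S, Λ f * Ivec f x y := by
  refine ⟨fun f => volume.real (quantileFiber μ M f), fun f => measureReal_nonneg,
    fun f hf => ?_, fun x y => ?_⟩
  · have : quantileFiber μ M f = ∅ :=
      Set.eq_empty_of_forall_notMem fun t ⟨ht, hft⟩ => hf (hft ▸ monotone_quantile hM hanti ht.2)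
    simp only [this, measureReal_empty]
  have hdisj : (({f | f x = y} : Finset (S → S)) : Set (S → S)).PairwiseDisjoint
      (quantileFiber μ M) :=
    fun f _ g _ hfg => Set.disjoint_left.2 fun t htf htg => hfg (htf.2.symm.trans htg.2)
  calc μ x y = volume.real (Set.Ico (rowCdf μ x y - μ x y) (rowCdf μ x y)) := by
        rw [Real.volume_real_Ico_of_le (by linarith [hμ x y])]; ring
    _ = ∑ f ∈ ({f | f x = y} : Finset (S → S)), volume.real (quantileFiber μ M f) := by
        rw [← quantile_fiber hμ hM, ← biUnion_quantileFiber,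
          measureReal_biUnion_finset hdisj (fun f _ => measurableSet_quantileFiber hμ hM f)
            fun f _ => (measure_mono fun t ht => ht.1).trans_lt measure_Ico_lt_top |>.ne]
    _ = ∑ f : S → S, volume.real (quantileFiber μ M f) * Ivec f x y := by
        rw [sum_filter]
        exact sum_congr rfl fun f _ => by simp [Ivec]

end QuantileCoupling

/-- on a finite linearly ordered set, monotonicity implies
complete monotonicity. -/
theorem mon_implies_cmon_on_chain {S : Type*} [Fintype S] [LinearOrder S]
    (L : S → S → ℝ) (hL : IsMonGen L) : IsCMonGen L := by
  obtain ⟨Λ, hΛ₀, hΛmono, hΛ⟩ := exists_monotone_decomposition (uniformized_nonneg hL.1)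
    (sum_uniformized L) fun _ _ h => hL.rowCdf_uniformized_antitone h
  refine ⟨Λ, hΛ₀, hΛmono, fun x y hxy => ?_⟩
  rw [← uniformized_of_ne (L := L) hxy, hΛ x y]
  -- the two sides enumerate `S → S` with different `DecidableEq S` instances
  convert rfl
end
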